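/- arXiv:1207.5245 — 6 statements merged into one kernel-verified Lean document; each statement's English description precedes it below -/
import Mathlib

section
/- Gaussian elimination for complexes: let X, Y, Z, W, U, V be objects in an additive category, and consider a complex ... → U →u X ⊕ Y →f Z ⊕ W →v V → ... where f is given by a matrix ((A, B),(C, D)). If D : Y → W is an isomorphism, then this complex is homotopy equivalent to the complex ... → U →u' X →(A − B D⁻¹ C) Z →v' V → ..., where u' and v' are the components of u and v. -/
/-!
With `f` written as the matrix `((A, B), (c, D))` and `D` invertible, the column and row
operations clearing `B` and `c` give chain maps `p = (𝟙, fst, desc 𝟙 (-D⁻¹ ≫ B), 𝟙)` to the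
reduced complex and `q = (𝟙, lift 𝟙 (-c ≫ D⁻¹), inl, 𝟙)` back. The outer squares commute because
`u ≫ f = 0` and `f ≫ v = 0` determine the `Y`-component of `u` and the `W`-component of `v`
through `D⁻¹`. Then `q ≫ p = 𝟙`, and `p ≫ q - 𝟙` is null-homotopic via the single map
`-(snd ≫ D⁻¹ ≫ inr) : Z ⊞ W ⟶ X ⊞ Y`.
-/

open CategoryTheory CategoryTheory.Limits ZeroObject

variable {C : Type} [Category C] [Preadditive C] [HasZeroObject C]

/-- The complex `⋯ → 0 → U → X → Z → V → 0 → ⋯` (in cohomological degrees `0,1,2,3`)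
associated to three composable maps with vanishing consecutive composites; it models a
complex whose possibly nonzero part is the displayed window. -/
noncomputable def fourComplex (U X Z V : C) (u : U ⟶ X) (f : X ⟶ Z) (v : Z ⟶ V)
    (h1 : u ≫ f = 0) (h2 : f ≫ v = 0) : CochainComplex C ℕ :=
  CochainComplex.of
    (fun n => match n with | 0 => U | 1 => X | 2 => Z | 3 => V | _ => 0)
    (fun n => match n with | 0 => u | 1 => f | 2 => v | _ + 3 => 0)
    (by
      intro n
      match n with
      | 0 => exact h1
      | 1 => exact h2
      | 2 => exact comp_zero
      | n + 3 => exact zero_comp)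

namespace fourComplex

variable {U X Z V X' Z' : C} {u : U ⟶ X} {f : X ⟶ Z} {v : Z ⟶ V}
  {h1 : u ≫ f = 0} {h2 : f ≫ v = 0}
  {u' : U ⟶ X'} {f' : X' ⟶ Z'} {v' : Z' ⟶ V} {h1' : u' ≫ f' = 0} {h2' : f' ≫ v' = 0}

@[simp]
lemma d_zero_one : (fourComplex U X Z V u f v h1 h2).d 0 1 = u := by
  dsimp only [fourComplex, CochainComplex.of]
  exact CochainComplex.of_d _ _ 0

@[simp]
lemma d_one_two : (fourComplex U X Z V u f v h1 h2).d 1 2 = f := by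
  dsimp only [fourComplex, CochainComplex.of]
  exact CochainComplex.of_d _ _ 1

@[simp]
lemma d_two_three : (fourComplex U X Z V u f v h1 h2).d 2 3 = v := by
  dsimp only [fourComplex, CochainComplex.of]
  exact CochainComplex.of_d _ _ 2

noncomputable def homMk (p₁ : X ⟶ X') (p₂ : Z ⟶ Z') (hu : u ≫ p₁ = u')
    (hf : f ≫ p₂ = p₁ ≫ f') (hv : v = p₂ ≫ v') :
    fourComplex U X Z V u f v h1 h2 ⟶ fourComplex U X' Z' V u' f' v' h1' h2' where
  f n := match n with
    | 0 => 𝟙 U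
    | 1 => p₁
    | 2 => p₂
    | 3 => 𝟙 V
    | _ + 4 => 0
  comm' := by
    rintro i j (rfl : i + 1 = j)
    match i with
    | 0 => rw [d_zero_one, d_zero_one]; exact (Category.id_comp u').trans hu.symm
    | 1 => rw [d_one_two, d_one_two]; exact hf.symm
    | 2 => rw [d_two_three, d_two_three]; exact (Category.comp_id v ▸ hv).symm
    | 3 => exact (isZero_zero C).eq_of_tgt _ _
    | _ + 4 => exact (isZero_zero C).eq_of_src _ _

noncomputable def homotopyComponents (H : Z ⟶ X) (i j : ℕ) (_ : (ComplexShape.up ℕ).Rel j i) :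
    (fourComplex U X Z V u f v h1 h2).X i ⟶ (fourComplex U X Z V u f v h1 h2).X j :=
  match i, j with
  | 2, 1 => H
  | _, _ => 0

variable {p₁ : X ⟶ X'} {p₂ : Z ⟶ Z'} {q₁ : X' ⟶ X} {q₂ : Z' ⟶ Z}
  {hu : u ≫ p₁ = u'} {hf : f ≫ p₂ = p₁ ≫ f'} {hv : v = p₂ ≫ v'}
  {hu' : u' ≫ q₁ = u} {hf' : f' ≫ q₂ = q₁ ≫ f} {hv' : v' = q₂ ≫ v}

lemma homMk_comp_homMk_sub_id {H : Z ⟶ X} (hpq₁ : p₁ ≫ q₁ = f ≫ H + 𝟙 X)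
    (hpq₂ : p₂ ≫ q₂ = H ≫ f + 𝟙 Z) :
    homMk (h1 := h1) (h2 := h2) (h1' := h1') (h2' := h2') p₁ p₂ hu hf hv ≫
        homMk q₁ q₂ hu' hf' hv' - 𝟙 _ =
      Homotopy.nullHomotopicMap' (homotopyComponents H) := by
  ext n
  match n with
  | 0 =>
    rw [Homotopy.nullHomotopicMap'_f_of_not_rel_right (k₀ := 1) rfl (by simp), d_zero_one]
    change 𝟙 U ≫ 𝟙 U - 𝟙 U = u ≫ 0
    simp
  | 1 =>
    rw [Homotopy.nullHomotopicMap'_f (k₂ := 0) (k₀ := 2) rfl rfl, d_zero_one, d_one_two]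
    change p₁ ≫ q₁ - 𝟙 X = f ≫ H + (0 : X ⟶ U) ≫ u
    simp [hpq₁]
  | 2 =>
    rw [Homotopy.nullHomotopicMap'_f (k₂ := 1) (k₀ := 3) rfl rfl, d_one_two, d_two_three]
    change p₂ ≫ q₂ - 𝟙 Z = v ≫ (0 : V ⟶ Z) + H ≫ f
    simp [hpq₂]
  | 3 =>
    rw [Homotopy.nullHomotopicMap'_f (k₂ := 2) (k₀ := 4) rfl rfl, d_two_three]
    change 𝟙 V ≫ 𝟙 V - 𝟙 V = (_ : V ⟶ 0) ≫ (0 : 0 ⟶ V) + (0 : V ⟶ Z) ≫ v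
    simp only [Category.id_comp, sub_self, zero_comp, add_zero]
    exact Eq.symm comp_zero
  | _ + 4 => exact (isZero_zero C).eq_of_src _ _

variable (p₁ p₂ q₁ q₂ hu hf hv hu' hf' hv')

noncomputable def homotopyEquivMk (hqp₁ : q₁ ≫ p₁ = 𝟙 X') (hqp₂ : q₂ ≫ p₂ = 𝟙 Z') (H : Z ⟶ X)
    (hpq₁ : p₁ ≫ q₁ = f ≫ H + 𝟙 X) (hpq₂ : p₂ ≫ q₂ = H ≫ f + 𝟙 Z) :
    HomotopyEquiv (fourComplex U X Z V u f v h1 h2) (fourComplex U X' Z' V u' f' v' h1' h2') where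
  hom := homMk p₁ p₂ hu hf hv
  inv := homMk q₁ q₂ hu' hf' hv'
  homotopyHomInvId := Homotopy.equivSubZero.symm <|
    (Homotopy.ofEq (homMk_comp_homMk_sub_id hpq₁ hpq₂)).trans (Homotopy.nullHomotopy' _)
  homotopyInvHomId := Homotopy.ofEq <| by
    ext n
    match n with
    | 0 | 3 => exact Category.id_comp _
    | 1 => exact hqp₁
    | 2 => exact hqp₂
    | _ + 4 => exact (isZero_zero C).eq_of_src _ _

end fourComplex

section GaussianElimination

variable {𝒜 : Type*} [Category 𝒜] [Preadditive 𝒜] {X Y Z W : 𝒜}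
  [HasBinaryBiproduct X Y] [HasBinaryBiproduct Z W]
  {A : X ⟶ Z} {B : Y ⟶ Z} {c : X ⟶ W} {D : Y ⟶ W} [IsIso D]

lemma biprod_matrix_comp_desc :
    biprod.desc (biprod.lift A c) (biprod.lift B D) ≫ biprod.desc (𝟙 Z) (-(inv D ≫ B)) =
      biprod.fst ≫ (A - c ≫ inv D ≫ B) := by
  ext <;> simp [sub_eq_add_neg]

lemma biprod_lift_comp_matrix :
    biprod.lift (𝟙 X) (-(c ≫ inv D)) ≫ biprod.desc (biprod.lift A c) (biprod.lift B D) =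
      (A - c ≫ inv D ≫ B) ≫ biprod.inl := by
  ext <;> simp [sub_eq_add_neg]

lemma biprod_fst_comp_lift :
    biprod.fst ≫ biprod.lift (𝟙 X) (-(c ≫ inv D)) =
      biprod.desc (biprod.lift A c) (biprod.lift B D) ≫ (-(biprod.snd ≫ inv D ≫ biprod.inr)) +
        𝟙 (X ⊞ Y) := by
  ext <;> simp

lemma biprod_desc_comp_inl :
    biprod.desc (𝟙 Z) (-(inv D ≫ B)) ≫ biprod.inl =
      (-(biprod.snd ≫ inv D ≫ biprod.inr)) ≫ biprod.desc (biprod.lift A c) (biprod.lift B D) +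
        𝟙 (Z ⊞ W) := by
  ext <;> simp

lemma comp_fst_comp_lift_eq_of_comp_matrix_eq_zero {U : 𝒜} {u : U ⟶ X ⊞ Y}
    (h : u ≫ biprod.desc (biprod.lift A c) (biprod.lift B D) = 0) :
    (u ≫ biprod.fst) ≫ biprod.lift (𝟙 X) (-(c ≫ inv D)) = u := by
  have hW : u ≫ biprod.fst ≫ c + u ≫ biprod.snd ≫ D = 0 := by
    simpa [biprod.desc_eq] using h =≫ biprod.snd
  ext
  · simp
  · rw [← cancel_mono D]
    simpa [neg_eq_iff_add_eq_zero] using hW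

lemma desc_comp_inl_comp_eq_of_matrix_comp_eq_zero {V : 𝒜} {v : Z ⊞ W ⟶ V}
    (h : biprod.desc (biprod.lift A c) (biprod.lift B D) ≫ v = 0) :
    biprod.desc (𝟙 Z) (-(inv D ≫ B)) ≫ biprod.inl ≫ v = v := by
  have hY : B ≫ biprod.inl ≫ v + D ≫ biprod.inr ≫ v = 0 := by
    simpa [biprod.lift_eq] using biprod.inr ≫= h
  ext
  · simp
  · rw [← cancel_epi D]
    simpa [neg_eq_iff_add_eq_zero] using hY

end GaussianElimination

/-- **Gaussian elimination for complexes.** Given a complex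
`⋯ → U → X ⊕ Y → Z ⊕ W → V → ⋯` whose middle differential has matrix `((A,B),(C,D))`
with `D : Y ⟶ W` an isomorphism, the complex is homotopy equivalent to
`⋯ → U → X → Z → V → ⋯` with middle differential `A − B D⁻¹ C`, the outer differentials
being the corresponding components of `u` and `v`. -/
theorem gaussian_elimination [HasBinaryBiproducts C]
    (U X Y Z W V : C) (u : U ⟶ X ⊞ Y)
    (A : X ⟶ Z) (B : Y ⟶ Z) (c : X ⟶ W) (D : Y ⟶ W) [IsIso D]
    (f : X ⊞ Y ⟶ Z ⊞ W) (hf : f = biprod.desc (biprod.lift A c) (biprod.lift B D))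
    (v : Z ⊞ W ⟶ V) (h1 : u ≫ f = 0) (h2 : f ≫ v = 0) :
    ∃ (h1' : (u ≫ biprod.fst) ≫ (A - c ≫ inv D ≫ B) = 0)
      (h2' : (A - c ≫ inv D ≫ B) ≫ (biprod.inl ≫ v) = 0),
      Nonempty (HomotopyEquiv
        (fourComplex U (X ⊞ Y) (Z ⊞ W) V u f v h1 h2)
        (fourComplex U X Z V (u ≫ biprod.fst) (A - c ≫ inv D ≫ B) (biprod.inl ≫ v)
          h1' h2')) := by
  subst hf
  have h1' : (u ≫ biprod.fst) ≫ (A - c ≫ inv D ≫ B) = 0 := by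
    rw [Category.assoc, ← biprod_matrix_comp_desc, reassoc_of% h1, zero_comp]
  have h2' : (A - c ≫ inv D ≫ B) ≫ (biprod.inl ≫ v) = 0 := by
    rw [← Category.assoc, ← biprod_lift_comp_matrix, Category.assoc, h2, comp_zero]
  exact ⟨h1', h2', ⟨fourComplex.homotopyEquivMk
    biprod.fst (biprod.desc (𝟙 Z) (-(inv D ≫ B))) (biprod.lift (𝟙 X) (-(c ≫ inv D))) biprod.inl
    rfl biprod_matrix_comp_desc (desc_comp_inl_comp_eq_of_matrix_comp_eq_zero h2).symm
    (comp_fst_comp_lift_eq_of_comp_matrix_eq_zero h1) biprod_lift_comp_matrix.symm rfl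
    (biprod.lift_fst _ _) (biprod.inl_desc _ _) _ biprod_fst_comp_lift biprod_desc_comp_inl⟩⟩
end

section
/- In a triangulated category satisfying the Krull–Schmidt property, if a (Postnikov-style) complex A_0 → A_1 → ... → A_n of objects (with consecutive composites zero) is homotopic to zero as a complex, then any convolution of it (the final object B_n of a Postnikov system built from distinguished triangles B_{j-1} → A_j → B_j) is isomorphic to the zero object. -/
/-!
By induction on `j`, the contracting homotopy `s` shows that every `g_j : B_j ⟶ A_{j+1}` of the
Postnikov system is a split monomorphism. For `j = 0` a retraction of `g_0` is `s_0 ≫ e₀`.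
If `g_j` is a split mono, the third morphism of the triangle `B_j → A_{j+1} → B_{j+1} →`
vanishes, so `h_j` is an epimorphism, and `s_{j+1} ≫ h_j` is a retraction of `g_{j+1}`: after
precomposing with `h_j` this is the homotopy identity `f_{j+1} ≫ s_{j+1} = 𝟙 - s_j ≫ f_j`, and
`f_j ≫ h_j = 0`. Finally `g_n` is a split mono into the zero object `A_{n+1}`, so `B_n = 0`.
-/

open CategoryTheory CategoryTheory.Limits CategoryTheory.Pretriangulated

variable {D : Type} [Category D] [Preadditive D] [HasZeroObject D] [HasShift D ℤ]
  [∀ n : ℤ, (CategoryTheory.shiftFunctor D n).Additive] [Pretriangulated D]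
  [HasFiniteBiproducts D]

/-- `Z` is a (right) convolution of the complex `A_0 → A_1 → ⋯ → A_n`, i.e. the final
object `B_n` of a Postnikov system: objects `B_0 = A_0, B_1, …, B_n` and morphisms
`g_j : B_{j−1} ⟶ A_j`, `h_j : A_j ⟶ B_j` (with `h_0 = id`) such that each
`B_{j−1} → A_j → B_j` extends to a distinguished triangle and `g_j ∘ h_{j−1} = f_j`. -/
def IsConvolution (n : ℕ) (A : ℕ → D) (f : ∀ j, A j ⟶ A (j + 1)) (Z : D) : Prop :=
  ∃ (B : ℕ → D) (e₀ : A 0 ≅ B 0) (g : ∀ j, B j ⟶ A (j + 1))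
    (h : ∀ j, A (j + 1) ⟶ B (j + 1)),
    (∀ j, ∃ w : B (j + 1) ⟶ (B j)⟦(1 : ℤ)⟧,
      Triangle.mk (g j) (h j) w ∈ distTriang D) ∧
    f 0 = e₀.hom ≫ g 0 ∧
    (∀ j, f (j + 1) = h j ≫ g (j + 1)) ∧
    Nonempty (Z ≅ B n)

theorem isSplitMono_of_epi_of_comp_comp_comp_eq {C : Type*} [Category C] {Y Z W : C}
    (h : Y ⟶ Z) [Epi h] (g : Z ⟶ W) (t : W ⟶ Y) (H : h ≫ g ≫ t ≫ h = h) :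
    IsSplitMono g :=
  IsSplitMono.mk' { retraction := t ≫ h, id := by rw [← cancel_epi h, H, Category.comp_id] }

theorem isSplitMono_of_distTriang_of_homotopy {C : Type*} [Category C] [Preadditive C]
    [HasZeroObject C] [HasShift C ℤ] [∀ n : ℤ, (shiftFunctor C n).Additive] [Pretriangulated C]
    {X₁ X₂ X₃ X W : C} {u : X₁ ⟶ X₂} {v : X₂ ⟶ X₃} {w : X₃ ⟶ X₁⟦(1 : ℤ)⟧}
    (hT : Triangle.mk u v w ∈ distTriang C) [IsSplitMono u]
    (f : X ⟶ X₂) (hf : f ≫ v = 0) (s : X₂ ⟶ X) (g : X₃ ⟶ W) (t : W ⟶ X₂)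
    (hs : 𝟙 X₂ = s ≫ f + (v ≫ g) ≫ t) : IsSplitMono g := by
  have hw : w = 0 := Triangle.mor₃_eq_zero_of_mono₁ _ hT (inferInstanceAs (Mono u))
  have : Epi v := Triangle.epi₂ _ hT hw
  refine isSplitMono_of_epi_of_comp_comp_comp_eq v g t ?_
  have hgt : v ≫ g ≫ t = 𝟙 X₂ - s ≫ f := by
    rw [hs, Category.assoc]
    abel
  rw [reassoc_of% hgt, Preadditive.sub_comp, Category.id_comp, Category.assoc, hf, comp_zero,
    sub_zero]

theorem convolution_of_nullhomotopic_isZero_general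
    (n : ℕ) (A : ℕ → D) (f : ∀ j, A j ⟶ A (j + 1))
    (htail : ∀ j, n ≤ j → IsZero (A (j + 1)))
    (hnull : ∃ s : ∀ j, A (j + 1) ⟶ A j,
      (𝟙 (A 0) = f 0 ≫ s 0) ∧
      ∀ j, 𝟙 (A (j + 1)) = s j ≫ f j + f (j + 1) ≫ s (j + 1)) :
    ∀ Z : D, IsConvolution n A f Z → IsZero Z := by
  rintro Z ⟨B, e₀, g, h, htri, hf0, hfs, ⟨eZ⟩⟩
  obtain ⟨s, hs0, hs⟩ := hnull
  have hgh : ∀ j, g j ≫ h j = 0 := fun j => comp_distTriang_mor_zero₁₂ _ (htri j).choose_spec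
  have hfh : ∀ j, f j ≫ h j = 0 := by
    rintro (_ | j) <;> simp [hf0, hfs, hgh]
  have hsplit : ∀ j, IsSplitMono (g j) := by
    intro j
    induction j with
    | zero =>
      refine isSplitMono_of_epi_of_comp_comp_comp_eq e₀.hom (g 0) (s 0) ?_
      rw [← reassoc_of% hf0, ← Category.assoc (f 0), ← hs0, Category.id_comp]
    | succ j ih =>
      obtain ⟨w, hT⟩ := htri j
      exact isSplitMono_of_distTriang_of_homotopy hT (f j) (hfh j) (s j) (g (j + 1)) (s (j + 1))
        (by rw [hs j, hfs j])
  exact (IsZero.of_mono (g n) (htail n le_rfl)).of_iso eZ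

/-- In a Krull–Schmidt triangulated category (every object is a finite direct sum of
objects with local endomorphism rings), any convolution of a complex
`A_0 → A_1 → ⋯ → A_n` (with zero tail) which is homotopic to zero is a zero object. -/
theorem convolution_of_nullhomotopic_isZero
    (hKS : ∀ X : D, ∃ (m : ℕ) (Y : Fin m → D),
      (∀ i, IsLocalRing (End (Y i))) ∧ Nonempty (X ≅ ⨁ Y))
    (n : ℕ) (A : ℕ → D) (f : ∀ j, A j ⟶ A (j + 1))
    (hcpx : ∀ j, f j ≫ f (j + 1) = 0)
    (htail : ∀ j, n ≤ j → IsZero (A (j + 1)))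
    (hnull : ∃ s : ∀ j, A (j + 1) ⟶ A j,
      (𝟙 (A 0) = f 0 ≫ s 0) ∧
      ∀ j, 𝟙 (A (j + 1)) = s j ≫ f j + f (j + 1) ≫ s (j + 1)) :
    ∀ Z : D, IsConvolution n A f Z → IsZero Z :=
  convolution_of_nullhomotopic_isZero_general n A f htail hnull
end

section
/- Let σ_i act on the ℤ[t,t⁻¹]-span of the Heisenberg generators a_j(−n) by: σ_i(a_i(−n)) = −t^{−2n} a_i(−n); σ_i(a_j(−n)) = a_j(−n) + (−1)^n t^{−n} a_i(−n) if i and j are adjacent; and σ_i(a_j(−n)) = a_j(−n) otherwise. Then these linear operators are invertible, with inverses given by the same formulas with t replaced by t⁻¹, and they satisfy the braid relations: σ_i σ_j σ_i = σ_j σ_i σ_j when i,j are adjacent and σ_i σ_j = σ_j σ_i when i,j are non-adjacent and distinct. -/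
open LaurentPolynomial Finset

section Aux

variable {I : Type} [Fintype I] [DecidableEq I] {R : Type} [CommRing R]
variable (Adj : I → I → Prop) [DecidableRel Adj]

/-- The generic shape of the braid operator on coordinates. -/
private def sg (A c : R) (i : I) (v : I → R) (l : I) : R :=
  if l = i then A * v i + ∑ j ∈ univ.filter (fun j => Adj i j), c * v j else v l

private def SS (i : I) (v : I → R) : R := ∑ j ∈ univ.filter (fun j => Adj i j), v j

private lemma sg_eq (A c : R) (i : I) (v : I → R) (l : I) :
    sg Adj A c i v l = if l = i then A * v i + c * SS Adj i v else v l := by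
  simp [sg, SS, Finset.mul_sum]

private lemma sg_self (A c : R) (i : I) (v : I → R) :
    sg Adj A c i v i = A * v i + c * SS Adj i v := by simp [sg_eq]

private lemma sg_ne (A c : R) {i l : I} (h : l ≠ i) (v : I → R) :
    sg Adj A c i v l = v l := by simp [sg_eq, h]

private lemma SS_sg_not (A c : R) {i j : I} (h : ¬ Adj i j) (v : I → R) :
    SS Adj i (sg Adj A c j v) = SS Adj i v := by
  refine Finset.sum_congr rfl fun k hk => sg_ne Adj A c (fun hkj => h ?_) v
  simp only [mem_filter] at hk
  exact hkj ▸ hk.2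

private lemma SS_sg_adj (A c : R) {i j : I} (h : Adj i j) (v : I → R) :
    SS Adj i (sg Adj A c j v) = SS Adj i v - v j + (A * v j + c * SS Adj j v) := by
  have hj : j ∈ univ.filter (fun k => Adj i k) := by simp [h]
  have h1 : SS Adj i (sg Adj A c j v)
      = sg Adj A c j v j + ∑ k ∈ (univ.filter (fun k => Adj i k)).erase j,
          sg Adj A c j v k := (Finset.add_sum_erase _ _ hj).symm
  have h2 : SS Adj i v
      = v j + ∑ k ∈ (univ.filter (fun k => Adj i k)).erase j, v k :=
    (Finset.add_sum_erase _ _ hj).symm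
  have h3 : ∑ k ∈ (univ.filter (fun k => Adj i k)).erase j, sg Adj A c j v k
      = ∑ k ∈ (univ.filter (fun k => Adj i k)).erase j, v k :=
    Finset.sum_congr rfl fun k hk => sg_ne Adj A c (Finset.ne_of_mem_erase hk) v
  rw [h1, h3, sg_self, h2]
  ring

private lemma sg_inv (A A' c c' : R) (hA : A * A' = 1) (h2 : A * c' + c = 0)
    {i : I} (hi : ¬ Adj i i) (v : I → R) : sg Adj A c i (sg Adj A' c' i v) = v := by
  funext l
  by_cases hl : l = i
  · subst hl
    rw [sg_self, sg_self, SS_sg_not Adj A' c' hi]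
    linear_combination v l * hA + SS Adj l v * h2
  · rw [sg_ne Adj A c hl, sg_ne Adj A' c' hl]

private lemma sg_braid (A c : R) (hc : c * c = -A)
    (hsymm : ∀ a b, Adj a b → Adj b a) (hirr : ∀ a, ¬ Adj a a)
    {i j : I} (hij : Adj i j) (v : I → R) :
    sg Adj A c i (sg Adj A c j (sg Adj A c i v)) =
      sg Adj A c j (sg Adj A c i (sg Adj A c j v)) := by
  have hji : Adj j i := hsymm i j hij
  have hne : i ≠ j := fun h => hirr i (h ▸ hij)
  funext l
  by_cases hli : l = i
  · subst hli
    simp only [sg_self, sg_ne Adj A c hne, sg_ne Adj A c hne.symm,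
      SS_sg_adj Adj A c hij, SS_sg_adj Adj A c hji,
      SS_sg_not Adj A c (hirr l), SS_sg_not Adj A c (hirr j)]
    linear_combination ((A - 1) * v l + c * SS Adj l v) * hc
  · by_cases hlj : l = j
    · subst hlj
      simp only [sg_self, sg_ne Adj A c hne, sg_ne Adj A c hne.symm,
        SS_sg_adj Adj A c hij, SS_sg_adj Adj A c hji,
        SS_sg_not Adj A c (hirr i), SS_sg_not Adj A c (hirr l)]
      linear_combination (-(A - 1) * v l - c * SS Adj l v) * hc
    · simp only [sg_ne Adj A c hli, sg_ne Adj A c hlj]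

private lemma sg_comm (A c : R) {i j : I} (hne : i ≠ j)
    (hij : ¬ Adj i j) (hji : ¬ Adj j i) (v : I → R) :
    sg Adj A c i (sg Adj A c j v) = sg Adj A c j (sg Adj A c i v) := by
  funext l
  by_cases hli : l = i
  · subst hli
    simp only [sg_self, sg_ne Adj A c hne, sg_ne Adj A c hne.symm,
      SS_sg_not Adj A c hij]
  · by_cases hlj : l = j
    · subst hlj
      simp only [sg_self, sg_ne Adj A c hne, sg_ne Adj A c hne.symm,
        SS_sg_not Adj A c hji]
    · simp only [sg_ne Adj A c hli, sg_ne Adj A c hlj]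

private lemma sg_linear (A c : R) (i : I) : IsLinearMap R (sg Adj A c i) := by
  constructor
  · intro v w
    funext l
    by_cases hl : l = i
    · subst hl
      simp only [sg_self, SS, Pi.add_apply, Finset.sum_add_distrib]
      ring
    · simp [sg_ne Adj A c hl, hl]
  · intro r v
    funext l
    by_cases hl : l = i
    · subst hl
      simp only [sg_self, SS, Pi.smul_apply, smul_eq_mul, ← Finset.mul_sum]
      ring
    · simp [sg_ne Adj A c hl, hl]

end Aux

/-- The braid group operators on the span of the degree-`n` Heisenberg generators
`a_j(−n)`: they are invertible, with inverse given by substituting `t ↦ t⁻¹`, and they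
satisfy the braid relations. Vectors `v : I → ℤ[t,t⁻¹]` record coordinates in the basis
`{a_j(−n)}_{j ∈ I}`, so that `σ_i` acts by
`σ_i(a_i(−n)) = −t^{−2n} a_i(−n)`, `σ_i(a_j(−n)) = a_j(−n) + (−1)ⁿ t^{−n} a_i(−n)` for
`j` adjacent to `i`, and `σ_i(a_j(−n)) = a_j(−n)` otherwise. -/
theorem heisenberg_generators_braid_action
    {I : Type} [Fintype I] [DecidableEq I] (G : SimpleGraph I) [DecidableRel G.Adj]
    (n : ℕ) (hn : 1 ≤ n) :
    let R := LaurentPolynomial ℤ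
    let σ : I → (I → R) → (I → R) := fun i v l =>
      if l = i then
        (-(LaurentPolynomial.T (-(2 * n : ℤ)))) * v i +
          ∑ j ∈ univ.filter (fun j => G.Adj i j),
            ((-1 : R) ^ n * LaurentPolynomial.T (-(n : ℤ))) * v j
      else v l
    let σ' : I → (I → R) → (I → R) := fun i v l =>
      if l = i then
        (-(LaurentPolynomial.T ((2 * n : ℤ)))) * v i +
          ∑ j ∈ univ.filter (fun j => G.Adj i j),
            ((-1 : R) ^ n * LaurentPolynomial.T ((n : ℤ))) * v j
      else v l
    (∀ i, IsLinearMap R (σ i)) ∧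
    (∀ i, σ i ∘ σ' i = id ∧ σ' i ∘ σ i = id) ∧
    (∀ i j, G.Adj i j → σ i ∘ σ j ∘ σ i = σ j ∘ σ i ∘ σ j) ∧
    (∀ i j, i ≠ j → ¬ G.Adj i j → σ i ∘ σ j = σ j ∘ σ i) := by
  intro R σ σ'
  set A : LaurentPolynomial ℤ := -(LaurentPolynomial.T (-(2 * n : ℤ))) with hAdef
  set A' : LaurentPolynomial ℤ := -(LaurentPolynomial.T ((2 * n : ℤ))) with hA'def
  set c : LaurentPolynomial ℤ := (-1 : LaurentPolynomial ℤ) ^ n * LaurentPolynomial.T (-(n : ℤ)) with hcdef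
  set c' : LaurentPolynomial ℤ := (-1 : LaurentPolynomial ℤ) ^ n * LaurentPolynomial.T ((n : ℤ)) with hc'def
  have hσ : ∀ i, σ i = sg G.Adj A c i := fun i => rfl
  have hσ' : ∀ i, σ' i = sg G.Adj A' c' i := fun i => rfl
  have hsign : ((-1 : LaurentPolynomial ℤ) ^ n) * ((-1 : LaurentPolynomial ℤ) ^ n) = 1 := by
    rw [← pow_add, ← two_mul, pow_mul]
    norm_num
  have hTadd : ∀ a b : ℤ, (T a : LaurentPolynomial ℤ) * T b = T (a + b) :=
    fun a b => (T_add a b).symm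
  have hA : A * A' = 1 := by
    rw [hAdef, hA'def, neg_mul_neg, hTadd]
    norm_num
  have hA2 : A' * A = 1 := by rw [mul_comm]; exact hA
  have h2 : A * c' + c = 0 := by
    rw [hAdef, hc'def, hcdef]
    have h : (T (-(2 * (n:ℤ))) : LaurentPolynomial ℤ) * T (n:ℤ) = T (-(n:ℤ)) := by
      rw [hTadd]; congr 1; ring
    linear_combination (-((-1 : LaurentPolynomial ℤ) ^ n)) * h
  have h2' : A' * c + c' = 0 := by
    rw [hA'def, hcdef, hc'def]
    have h : (T ((2 * (n:ℤ))) : LaurentPolynomial ℤ) * T (-(n:ℤ)) = T ((n:ℤ)) := by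
      rw [hTadd]; congr 1; ring
    linear_combination (-((-1 : LaurentPolynomial ℤ) ^ n)) * h
  have hc : c * c = -A := by
    rw [hcdef, hAdef, neg_neg]
    have h : (T (-(n:ℤ)) : LaurentPolynomial ℤ) * T (-(n:ℤ)) = T (-(2 * n : ℤ)) := by
      rw [hTadd]; congr 1; ring
    linear_combination (T (-(n:ℤ)) : LaurentPolynomial ℤ) * T (-(n:ℤ)) * hsign + h
  refine ⟨fun i => ?_, fun i => ⟨?_, ?_⟩, fun i j hij => ?_, fun i j hne hij => ?_⟩
  · rw [hσ]; exact sg_linear G.Adj A c i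
  · funext v; rw [Function.comp_apply, hσ, hσ', id_eq]
    exact sg_inv G.Adj A A' c c' hA h2 (G.irrefl) v
  · funext v; rw [Function.comp_apply, hσ, hσ', id_eq]
    exact sg_inv G.Adj A' A c' c hA2 h2' (G.irrefl) v
  · funext v
    simp only [Function.comp_apply, hσ]
    exact sg_braid G.Adj A c hc (fun a b => G.adj_symm) (fun a => G.irrefl) hij v
  · funext v
    simp only [Function.comp_apply, hσ]
    exact sg_comm G.Adj A c hne hij (fun h => hij (G.adj_symm h)) v
end

section
/- With the braid operators σ_i on Fock space as defined on multiplicative generators by σ_i(P_i^{(n)}) = (−t^{−2})^n P_i^{(1^n)}, σ_i(P_j^{(n)}) = Σ_{k=0}^{n} (−t^{−1})^{n−k} P_j^{(k)} P_i^{(n−k)} for ⟨i,j⟩ = −1, and σ_i(P_j^{(n)}) = P_j^{(n)} for ⟨i,j⟩ = 0, and extended multiplicatively: if i, j are adjacent vertices then σ_i σ_j σ_i (P_i^{(n)}) = t^{−3n} P_j^{(1^n)}. -/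
/-!
Package the generators into the series `H_i(z) = Σ P_i^{(n)} zⁿ` and `E_i(z) = Σ P_i^{(1ⁿ)} zⁿ`.
Expanding the Jacobi–Trudi determinant along its last column gives `E_i(-z) H_i(z) = 1`.
On series the braid operators act by `σ_i H_i(z) = E_i(-t⁻² z)` and
`σ_i H_j(z) = H_j(z) H_i(-t⁻¹ z)`, so by inversion `σ_i E_i(z) = H_i(-t⁻² z)` and
`σ_i E_j(z) = E_j(z) E_i(-t⁻¹ z)`. Hence
`σ_i σ_j σ_i H_i(z) = H_i(t⁻⁴ z) E_j(t⁻³ z) E_i(-t⁻⁴ z) = E_j(t⁻³ z)`;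
comparing coefficients of `zⁿ` gives the theorem.
-/

open LaurentPolynomial Finset

namespace FockBraid

variable {I : Type} [DecidableEq I] (G : SimpleGraph I) [DecidableRel G.Adj]

/-- The ground ring `ℤ[t,t⁻¹]`. -/
noncomputable abbrev R : Type := LaurentPolynomial ℤ

/-- The Fock space, modelled as the free polynomial algebra on the generators
`P_j^{(n)}`, `j ∈ I`, `n ≥ 1` (the variable `(j, m)` stands for `P_j^{(m+1)}`);
for each fixed `j` the `P_j^{(λ)}` multiply like Schur functions. -/
noncomputable abbrev Fock (I : Type) : Type := MvPolynomial (I × ℕ) R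

/-- The generator `P_j^{(n)}` (with `P_j^{(0)} = 1`). -/
noncomputable def Pgen (j : I) (n : ℕ) : Fock I :=
  if n = 0 then 1 else MvPolynomial.X (j, n - 1)

/-- `P_i^{(1^n)}`, defined from the `P_i^{(m)}` by the Giambelli (Jacobi–Trudi)
determinant `P_i^{(1^n)} = det (P_i^{(1 + l − k)})_{0 ≤ k,l < n}`. -/
noncomputable def Pcol (i : I) (n : ℕ) : Fock I :=
  Matrix.det (Matrix.of fun k l : Fin n =>
    if (k : ℕ) ≤ (l : ℕ) + 1 then Pgen i ((l : ℕ) + 1 - (k : ℕ)) else 0)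

/-- The braid generator `σ_i`, the algebra endomorphism of Fock space determined by
`σ_i(P_i^{(n)}) = (−t^{−2})ⁿ P_i^{(1^n)}`,
`σ_i(P_j^{(n)}) = Σ_{k=0}^{n} (−t^{−1})^{n−k} P_j^{(k)} P_i^{(n−k)}` if `⟨i,j⟩ = −1`, and
`σ_i(P_j^{(n)}) = P_j^{(n)}` if `⟨i,j⟩ = 0`. -/
noncomputable def braidOp (i : I) : Fock I →ₐ[R] Fock I :=
  MvPolynomial.aeval (fun p : I × ℕ =>
    let j := p.1
    let n := p.2 + 1
    if j = i then (-(LaurentPolynomial.T (-2) : R)) ^ n • Pcol i n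
    else if G.Adj i j then
      ∑ k ∈ Finset.range (n + 1),
        (-(LaurentPolynomial.T (-1) : R)) ^ (n - k) • (Pgen j k * Pgen i (n - k))
    else Pgen j n)

open PowerSeries

section JacobiTrudi

variable {A : Type*} [CommRing A] (h : ℕ → A)

def jacobiTrudiEntry (r c : ℕ) : A := if r ≤ c + 1 then h (c + 1 - r) else 0

def jacobiTrudiDet (n : ℕ) : A := (Matrix.of fun k l : Fin n => jacobiTrudiEntry h k l).det

/-- The matrix of `jacobiTrudiDet h (m + 1)` with row `k` and the last column deleted. -/
def jacobiTrudiMinor (k m : ℕ) : Matrix (Fin m) (Fin m) A :=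
  Matrix.of fun a b => jacobiTrudiEntry h (if (a : ℕ) < k then a else a + 1) b

variable {h}

lemma det_jacobiTrudiMinor_self (k : ℕ) : (jacobiTrudiMinor h k k).det = jacobiTrudiDet h k := by
  congr 1
  ext a b
  simp [jacobiTrudiMinor]

lemma det_jacobiTrudiMinor_succ (h0 : h 0 = 1) {k m : ℕ} (hkm : k ≤ m) :
    (jacobiTrudiMinor h k (m + 1)).det = (jacobiTrudiMinor h k m).det := by
  have last_row : ∀ b : Fin (m + 1),
      jacobiTrudiMinor h k (m + 1) (Fin.last m) b = if b = Fin.last m then 1 else 0 := by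
    intro b
    have hb := b.isLt
    simp only [jacobiTrudiMinor, jacobiTrudiEntry, Matrix.of_apply, Fin.val_last,
      if_neg (not_lt.mpr hkm), Fin.ext_iff]
    split_ifs with h1 h2 h2
    · rw [show (b : ℕ) + 1 - (m + 1) = 0 by omega, h0]
    · omega
    · omega
    · rfl
  rw [Matrix.det_succ_row _ (Fin.last m), sum_eq_single (Fin.last m)
    (fun b _ hb => by rw [last_row, if_neg hb]; ring) (by simp), last_row, if_pos rfl]
  have minor : (jacobiTrudiMinor h k (m + 1)).submatrix Fin.castSucc Fin.castSucc
      = jacobiTrudiMinor h k m := by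
    ext a b
    simp [jacobiTrudiMinor]
  simp [Fin.succAbove_last, minor, ← two_mul, pow_mul]

lemma det_jacobiTrudiMinor (h0 : h 0 = 1) {k m : ℕ} (hkm : k ≤ m) :
    (jacobiTrudiMinor h k m).det = jacobiTrudiDet h k := by
  induction m, hkm using Nat.le_induction with
  | base => exact det_jacobiTrudiMinor_self k
  | succ m hkm ih => rw [det_jacobiTrudiMinor_succ h0 hkm, ih]

lemma jacobiTrudiDet_succ (h0 : h 0 = 1) (m : ℕ) :
    jacobiTrudiDet h (m + 1) =
      ∑ k ∈ range (m + 1), (-1) ^ (k + m) * h (m + 1 - k) * jacobiTrudiDet h k := by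
  rw [jacobiTrudiDet, Matrix.det_succ_column _ (Fin.last m), ← Fin.sum_univ_eq_sum_range]
  refine sum_congr rfl fun k _ => ?_
  have minor : (Matrix.of fun k l : Fin (m + 1) => jacobiTrudiEntry h k l).submatrix
      k.succAbove (Fin.last m).succAbove = jacobiTrudiMinor h k m := by
    ext a b
    simp only [Matrix.submatrix_apply, Fin.succAbove_last, Matrix.of_apply, jacobiTrudiMinor,
      Fin.val_castSucc, Fin.succAbove, Fin.lt_def]
    split_ifs <;> rfl
  rw [minor, det_jacobiTrudiMinor h0 (Nat.lt_succ_iff.mp k.isLt)]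
  simp [jacobiTrudiEntry, Nat.le_succ_of_le (Nat.lt_succ_iff.mp k.isLt)]

lemma mk_neg_one_pow_mul_jacobiTrudiDet_mul_mk (h0 : h 0 = 1) :
    mk (fun k => (-1) ^ k * jacobiTrudiDet h k) * mk h = 1 := by
  ext n
  rw [coeff_mul, Nat.sum_antidiagonal_eq_sum_range_succ_mk, coeff_one]
  simp only [coeff_mk]
  cases n with
  | zero => simp [jacobiTrudiDet, h0]
  | succ m =>
    rw [sum_range_succ, Nat.sub_self, h0, jacobiTrudiDet_succ h0, mul_one, mul_sum,
      ← sum_add_distrib, if_neg m.succ_ne_zero]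
    refine sum_eq_zero fun k _ => ?_
    have sign : (-1 : A) ^ (m + 1) * (-1) ^ (k + m) = -(-1) ^ k := by
      rw [← pow_add, show m + 1 + (k + m) = k + 2 * m + 1 by ring, pow_succ, pow_add, pow_mul]
      simp
    linear_combination (h (m + 1 - k) * jacobiTrudiDet h k) * sign

lemma rescale_mk_jacobiTrudiDet_mul_rescale_mk (h0 : h 0 = 1) (c : A) :
    rescale c (mk (jacobiTrudiDet h)) * rescale (-c) (mk h) = 1 := by
  have key := congrArg (rescale (-c)) (mk_neg_one_pow_mul_jacobiTrudiDet_mul_mk h0)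
  rwa [map_mul, map_one, ← rescale_mk, rescale_rescale, neg_one_mul, neg_neg] at key

end JacobiTrudi

lemma rescale_mk_Pcol_mul_rescale_mk_Pgen {ι : Type} (i : ι) (r : R) :
    rescale (algebraMap R (Fock ι) r) (mk (Pcol i)) *
      rescale (algebraMap R (Fock ι) (-r)) (mk (Pgen i)) = 1 := by
  rw [map_neg]
  exact rescale_mk_jacobiTrudiDet_mul_rescale_mk rfl _

lemma rescale_map_mk_Pcol_mul_rescale_map_mk_Pgen {ι : Type} (φ : Fock ι →ₐ[R] Fock ι)
    (i : ι) (r : R) :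
    rescale (algebraMap R (Fock ι) r) ((mk (Pcol i)).map φ) *
      rescale (algebraMap R (Fock ι) (-r)) ((mk (Pgen i)).map φ) = 1 := by
  rw [rescale_algebraMap_map, rescale_algebraMap_map, ← map_mul,
    rescale_mk_Pcol_mul_rescale_mk_Pgen, map_one]

lemma braidOp_Pgen_self (i : I) (n : ℕ) :
    braidOp G i (Pgen i n) = (-T (-2) : R) ^ n • Pcol i n := by
  cases n with
  | zero => simp [Pgen, Pcol]
  | succ m => simp [Pgen, braidOp]

lemma braidOp_Pgen_of_adj {i j : I} (hij : G.Adj i j) (n : ℕ) :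
    braidOp G i (Pgen j n) = ∑ k ∈ range (n + 1),
      (-T (-1) : R) ^ (n - k) • (Pgen j k * Pgen i (n - k)) := by
  cases n with
  | zero => simp [Pgen]
  | succ m => simp [Pgen, braidOp, hij.ne', hij]

lemma map_braidOp_mk_Pgen_self (i : I) :
    (mk (Pgen i)).map (braidOp G i : Fock I →+* Fock I) =
      rescale (algebraMap R (Fock I) (-T (-2))) (mk (Pcol i)) := by
  ext n
  simp [braidOp_Pgen_self, coeff_rescale, Algebra.smul_def]

lemma map_braidOp_mk_Pgen_of_adj {i j : I} (hij : G.Adj i j) :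
    (mk (Pgen j)).map (braidOp G i : Fock I →+* Fock I) =
      mk (Pgen j) * rescale (algebraMap R (Fock I) (-T (-1))) (mk (Pgen i)) := by
  ext n
  rw [coeff_map, coeff_mul, Nat.sum_antidiagonal_eq_sum_range_succ_mk]
  simp [braidOp_Pgen_of_adj G hij, coeff_rescale, Algebra.smul_def, mul_left_comm]

lemma map_braidOp_mk_Pcol_self (i : I) :
    (mk (Pcol i)).map (braidOp G i : Fock I →+* Fock I) =
      rescale (algebraMap R (Fock I) (-T (-2))) (mk (Pgen i)) := by
  have inv := rescale_map_mk_Pcol_mul_rescale_map_mk_Pgen (braidOp G i) i 1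
  rw [map_one, rescale_one, RingHom.id_apply, map_braidOp_mk_Pgen_self, rescale_rescale,
    ← map_mul, mul_neg_one, neg_neg] at inv
  exact left_inv_eq_right_inv inv (rescale_mk_Pcol_mul_rescale_mk_Pgen i (T (-2)))

lemma map_braidOp_mk_Pcol_of_adj {i j : I} (hij : G.Adj i j) :
    (mk (Pcol j)).map (braidOp G i : Fock I →+* Fock I) =
      mk (Pcol j) * rescale (algebraMap R (Fock I) (-T (-1))) (mk (Pcol i)) := by
  have inv := rescale_map_mk_Pcol_mul_rescale_map_mk_Pgen (braidOp G i) j 1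
  rw [map_one, rescale_one, RingHom.id_apply, map_braidOp_mk_Pgen_of_adj G hij, map_mul,
    rescale_rescale, ← map_mul, mul_neg_one, neg_neg] at inv
  refine left_inv_eq_right_inv inv ?_
  calc rescale (algebraMap R (Fock I) (-1)) (mk (Pgen j)) *
        rescale (algebraMap R (Fock I) (T (-1))) (mk (Pgen i)) *
        (mk (Pcol j) * rescale (algebraMap R (Fock I) (-T (-1))) (mk (Pcol i)))
      = (rescale (algebraMap R (Fock I) 1) (mk (Pcol j)) *
          rescale (algebraMap R (Fock I) (-1)) (mk (Pgen j))) *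
        (rescale (algebraMap R (Fock I) (-T (-1))) (mk (Pcol i)) *
          rescale (algebraMap R (Fock I) (- -T (-1))) (mk (Pgen i))) := by
        rw [map_one, rescale_one, RingHom.id_apply, neg_neg]; ring
    _ = 1 := by rw [rescale_mk_Pcol_mul_rescale_mk_Pgen, rescale_mk_Pcol_mul_rescale_mk_Pgen,
        mul_one]

lemma map_braidOp_braidOp_braidOp_mk_Pgen {i j : I} (hij : G.Adj i j) :
    (((mk (Pgen i)).map (braidOp G i : Fock I →+* Fock I)).map
        (braidOp G j : Fock I →+* Fock I)).map (braidOp G i : Fock I →+* Fock I) =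
      rescale (algebraMap R (Fock I) (T (-3))) (mk (Pcol j)) := by
  rw [map_braidOp_mk_Pgen_self, ← rescale_algebraMap_map, map_braidOp_mk_Pcol_of_adj G hij.symm,
    ← rescale_algebraMap_map, map_mul, ← rescale_algebraMap_map, map_braidOp_mk_Pcol_self,
    map_braidOp_mk_Pcol_of_adj G hij]
  simp only [map_mul, rescale_rescale]
  simp only [← (algebraMap R (Fock I)).map_mul]
  have scale_i : (-T (-2) : R) * -T (-2) = -(-T (-1) * -T (-1) * -T (-2)) := by
    rw [neg_mul_neg, neg_mul_neg, mul_neg, neg_neg, ← T_add, ← T_add, ← T_add]; norm_num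
  have scale_j : (-T (-1) : R) * -T (-2) = T (-3) := by
    rw [neg_mul_neg, ← T_add]; norm_num
  rw [scale_i, scale_j, ← mul_assoc, mul_right_comm, mul_comm (rescale _ (mk (Pgen i))),
    rescale_mk_Pcol_mul_rescale_mk_Pgen, one_mul]

/-- If `i` and `j` are adjacent then `σ_i σ_j σ_i (P_i^{(n)}) = t^{−3n} P_j^{(1^n)}`. -/
theorem braid_on_Pn (i j : I) (hij : G.Adj i j) (n : ℕ) :
    braidOp G i (braidOp G j (braidOp G i (Pgen i n))) =
      (LaurentPolynomial.T (-(3 * n : ℤ)) : R) • Pcol j n := by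
  have coeff_n := congrArg (coeff n) (map_braidOp_braidOp_braidOp_mk_Pgen G hij)
  simp only [coeff_map, coeff_mk, coeff_rescale, AlgHom.coe_toRingHom] at coeff_n
  rw [coeff_n, Algebra.smul_def, ← map_pow, T_pow]
  congr 3
  ring

end FockBraid
end

section
/- Let B be the zig-zag algebra of type A₁, i.e., B = k⟨1, X⟩/(X²) with X in degree 2, let B' = B ⊗_k B regarded as a (B,B)-bimodule, and define complexes of (B,B)-bimodules Σ = [B'⟨−2⟩ →m B] (multiplication map, B in cohomological degree 0) and Σ⁻¹ = [B →c B'⟨2⟩] (the adjoint/coevaluation map b ↦ b·(1⊗1 coevaluation), B in degree 0). Then Σ ⊗_B Σ⁻¹ is homotopy equivalent to B as a complex of (B,B)-bimodules. -/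
open scoped TensorProduct

namespace ZigZagSphericalTwist

variable (k : Type) [Field k]

/-- The type `A₁` zig-zag algebra `B = k[X]/(X²)`. -/
noncomputable abbrev B : Type := DualNumber k

/-- `B' = B ⊗ B`, the bimodule underlying the spherical twist. -/
noncomputable abbrev E : Type := B k ⊗[k] B k

/-- `B' ⊗_B B' ≅ B ⊗ B ⊗ B`. -/
noncomputable abbrev B₃ : Type := B k ⊗[k] (B k ⊗[k] B k)

noncomputable def ε : B k := DualNumber.eps

/-- Multiplication `B' → B`. -/
noncomputable def mul2 : E k →ₗ[k] B k := LinearMap.mul' k (B k)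

/-- The coevaluation `B → B'⟨2⟩`, `b ↦ (b·X)⊗1 + b⊗X` (dual of multiplication for the
Frobenius trace on `B`). -/
noncomputable def coev : B k →ₗ[k] E k :=
  (((TensorProduct.mk k (B k) (B k)).flip (1 : B k)).comp (LinearMap.mulRight k (ε k))) +
    ((TensorProduct.mk k (B k) (B k)).flip (ε k))

/-- `B ⊗ B ⊗ B → B'`, multiplying the first two factors. -/
noncomputable def m3 : B₃ k →ₗ[k] E k :=
  (LinearMap.rTensor (B k) (mul2 k)).comp
    (TensorProduct.assoc k (B k) (B k) (B k)).symm.toLinearMap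

/-- The degree `−1` differential of the total complex of `Σ ⊗_B Σ⁻¹`. -/
noncomputable def dm1 : E k →ₗ[k] B k × B₃ k :=
  LinearMap.prod (mul2 k) ((-1 : k) • (LinearMap.lTensor (B k) (coev k) : E k →ₗ[k] B₃ k))

/-- The degree `0` differential of the total complex of `Σ ⊗_B Σ⁻¹`. -/
noncomputable def d0 : B k × B₃ k →ₗ[k] E k :=
  LinearMap.coprod (coev k) (m3 k)

/-- Left `B`-action on `B`. -/
noncomputable def lB (b : B k) : B k →ₗ[k] B k := LinearMap.mulLeft k b
/-- Right `B`-action on `B`. -/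
noncomputable def rB (b : B k) : B k →ₗ[k] B k := LinearMap.mulRight k b
/-- Left `B`-action on `B' = B ⊗ B` (on the first factor). -/
noncomputable def lE (b : B k) : E k →ₗ[k] E k := LinearMap.rTensor (B k) (LinearMap.mulLeft k b)
/-- Right `B`-action on `B' = B ⊗ B` (on the second factor). -/
noncomputable def rE (b : B k) : E k →ₗ[k] E k := LinearMap.lTensor (B k) (LinearMap.mulRight k b)
/-- Left `B`-action on `B ⊗ B ⊗ B` (on the first factor). -/
noncomputable def lB3 (b : B k) : B₃ k →ₗ[k] B₃ k :=
  LinearMap.rTensor (B k ⊗[k] B k) (LinearMap.mulLeft k b)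
/-- Right `B`-action on `B ⊗ B ⊗ B` (on the last factor). -/
noncomputable def rB3 (b : B k) : B₃ k →ₗ[k] B₃ k :=
  LinearMap.lTensor (B k) (LinearMap.lTensor (B k) (LinearMap.mulRight k b))

/-- Left `B`-action on the middle term `B ⊕ (B' ⊗_B B')` of the total complex. -/
noncomputable def lP (b : B k) : B k × B₃ k →ₗ[k] B k × B₃ k :=
  (lB k b).prodMap (lB3 k b)
/-- Right `B`-action on the middle term `B ⊕ (B' ⊗_B B')` of the total complex. -/
noncomputable def rP (b : B k) : B k × B₃ k →ₗ[k] B k × B₃ k :=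
  (rB k b).prodMap (rB3 k b)

/-! Gaussian elimination. Let `τ : B → k`, `a + bε ↦ b`, be the Frobenius trace and split the
middle factor of `B ⊗ B ⊗ B` along `B = k·1 ⊕ k·ε`. The zig-zag identity `(τ ⊗ id) ∘ coev = id`
makes the component `B' → B ⊗ ε ⊗ B` of the first differential an isomorphism, inverted by
`-(id ⊗ τ ⊗ id)`, while multiplication maps `B ⊗ 1 ⊗ B` isomorphically onto `B'`, inverted by
`x ⊗ y ↦ x ⊗ 1 ⊗ y`. Cancelling both pairs leaves `B` in degree `0`. All maps involved touch the
outer factors only through multiplication, so they are bimodule maps; for `coev` this is because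
`b · (ε ⊗ 1 + 1 ⊗ ε) = (ε ⊗ 1 + 1 ⊗ ε) · b` for every `b ∈ B`. -/

open TensorProduct

lemma exists_eq_smul_one_add_smul_ε (b : B k) : ∃ r s : k, b = r • 1 + s • ε k :=
  ⟨b.fst, b.snd, by ext <;> simp [ε]⟩

@[simp] lemma ε_mul_ε : ε k * ε k = 0 := DualNumber.eps_mul_eps

@[simp] lemma mul2_tmul (x y : B k) : mul2 k (x ⊗ₜ y) = x * y := rfl

@[simp] lemma m3_tmul (x y z : B k) : m3 k (x ⊗ₜ (y ⊗ₜ z)) = (x * y) ⊗ₜ z := by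
  simp [m3, mul2]

lemma coev_apply (b : B k) : coev k b = (b * ε k) ⊗ₜ 1 + b ⊗ₜ ε k := by
  simp [coev]

noncomputable def trace : B k →ₗ[k] k := TrivSqZeroExt.sndHom k k

@[simp] lemma trace_one : trace k 1 = 0 := rfl

@[simp] lemma trace_ε : trace k (ε k) = 1 := rfl

noncomputable def traceLeft : E k →ₗ[k] B k :=
  TensorProduct.lid k (B k) ∘ₗ (trace k).rTensor (B k)

noncomputable def traceMiddle : B₃ k →ₗ[k] E k := (traceLeft k).lTensor (B k)

noncomputable def insertOne : E k →ₗ[k] B₃ k :=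
  (TensorProduct.mk k (B k) (B k) 1).lTensor (B k)

@[simp] lemma traceLeft_tmul (y z : B k) : traceLeft k (y ⊗ₜ z) = trace k y • z := by
  simp [traceLeft]

@[simp] lemma traceMiddle_tmul (x y z : B k) :
    traceMiddle k (x ⊗ₜ (y ⊗ₜ z)) = trace k y • (x ⊗ₜ z) := by
  simp [traceMiddle, tmul_smul]

@[simp] lemma insertOne_tmul (x y : B k) : insertOne k (x ⊗ₜ y) = x ⊗ₜ (1 ⊗ₜ y) := by
  simp [insertOne]

lemma traceLeft_coev (b : B k) : traceLeft k (coev k b) = b := by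
  obtain ⟨r, s, rfl⟩ := exists_eq_smul_one_add_smul_ε k b
  simp [coev_apply, add_mul, add_tmul]

lemma traceMiddle_lTensor_coev (x : E k) : traceMiddle k ((coev k).lTensor (B k) x) = x := by
  rw [traceMiddle, ← LinearMap.comp_apply, ← LinearMap.lTensor_comp,
    show traceLeft k ∘ₗ coev k = LinearMap.id from LinearMap.ext (traceLeft_coev k),
    LinearMap.lTensor_id, LinearMap.id_apply]

lemma traceMiddle_insertOne (x : E k) : traceMiddle k (insertOne k x) = 0 := by
  suffices traceMiddle k ∘ₗ insertOne k = 0 from LinearMap.congr_fun this x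
  exact TensorProduct.ext' fun y z => by simp

lemma m3_insertOne (x : E k) : m3 k (insertOne k x) = x := by
  suffices m3 k ∘ₗ insertOne k = LinearMap.id from LinearMap.congr_fun this x
  exact TensorProduct.ext' fun y z => by simp

lemma lTensor_coev_traceMiddle_add_insertOne_m3_sub (t : B₃ k) :
    (coev k).lTensor (B k) (traceMiddle k t) + insertOne k (m3 k t) -
      insertOne k (coev k (mul2 k (traceMiddle k t))) = t := by
  suffices (coev k).lTensor (B k) ∘ₗ traceMiddle k + insertOne k ∘ₗ m3 k -
      insertOne k ∘ₗ coev k ∘ₗ mul2 k ∘ₗ traceMiddle k = LinearMap.id from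
    LinearMap.congr_fun this t
  refine TensorProduct.ext_threefold' fun x y z => ?_
  obtain ⟨r, s, rfl⟩ := exists_eq_smul_one_add_smul_ε k y
  obtain ⟨r', s', rfl⟩ := exists_eq_smul_one_add_smul_ε k z
  simp [coev_apply, tmul_add, add_tmul, add_mul, ← smul_tmul', tmul_smul, smul_smul, mul_assoc]
  module

lemma coev_mul_left (b x : B k) : coev k (b * x) = lE k b (coev k x) := by
  simp [coev_apply, lE, mul_assoc]

lemma coev_mul_right (b x : B k) : coev k (x * b) = rE k b (coev k x) := by
  obtain ⟨r, s, rfl⟩ := exists_eq_smul_one_add_smul_ε k b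
  simp [coev_apply, rE, mul_add, add_mul, tmul_add, add_tmul, mul_assoc, smul_tmul', add_comm,
    add_left_comm]

lemma mul2_lE (b : B k) (x : E k) : mul2 k (lE k b x) = b * mul2 k x := by
  suffices mul2 k ∘ₗ lE k b = LinearMap.mulLeft k b ∘ₗ mul2 k from LinearMap.congr_fun this x
  exact TensorProduct.ext' fun y z => by simp [lE, mul_assoc]

lemma mul2_rE (b : B k) (x : E k) : mul2 k (rE k b x) = mul2 k x * b := by
  suffices mul2 k ∘ₗ rE k b = LinearMap.mulRight k b ∘ₗ mul2 k from LinearMap.congr_fun this x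
  exact TensorProduct.ext' fun y z => by simp [rE, mul_assoc]

lemma traceMiddle_lB3 (b : B k) (t : B₃ k) :
    traceMiddle k (lB3 k b t) = lE k b (traceMiddle k t) := by
  suffices traceMiddle k ∘ₗ lB3 k b = lE k b ∘ₗ traceMiddle k from LinearMap.congr_fun this t
  exact TensorProduct.ext_threefold' fun x y z => by simp [lB3, lE, smul_tmul']

lemma traceMiddle_rB3 (b : B k) (t : B₃ k) :
    traceMiddle k (rB3 k b t) = rE k b (traceMiddle k t) := by
  suffices traceMiddle k ∘ₗ rB3 k b = rE k b ∘ₗ traceMiddle k from LinearMap.congr_fun this t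
  exact TensorProduct.ext_threefold' fun x y z => by simp [rB3, rE]

lemma insertOne_lE (b : B k) (x : E k) : insertOne k (lE k b x) = lB3 k b (insertOne k x) := by
  suffices insertOne k ∘ₗ lE k b = lB3 k b ∘ₗ insertOne k from LinearMap.congr_fun this x
  exact TensorProduct.ext' fun y z => by simp [lB3, lE]

lemma insertOne_rE (b : B k) (x : E k) : insertOne k (rE k b x) = rB3 k b (insertOne k x) := by
  suffices insertOne k ∘ₗ rE k b = rB3 k b ∘ₗ insertOne k from LinearMap.congr_fun this x
  exact TensorProduct.ext' fun y z => by simp [rB3, rE]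

noncomputable def proj : B k × B₃ k →ₗ[k] B k := LinearMap.id.coprod (mul2 k ∘ₗ traceMiddle k)

noncomputable def incl : B k →ₗ[k] B k × B₃ k := LinearMap.id.prod (-(insertOne k ∘ₗ coev k))

noncomputable def homotopy₀ : B k × B₃ k →ₗ[k] E k := (0 : B k →ₗ[k] E k).coprod (-traceMiddle k)

noncomputable def homotopy₁ : E k →ₗ[k] B k × B₃ k := (0 : E k →ₗ[k] B k).prod (insertOne k)

lemma proj_lP (b : B k) (x : B k × B₃ k) : proj k (lP k b x) = b * proj k x := by
  simp [proj, lP, lB, traceMiddle_lB3, mul2_lE, mul_add]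

lemma proj_rP (b : B k) (x : B k × B₃ k) : proj k (rP k b x) = proj k x * b := by
  simp [proj, rP, rB, traceMiddle_rB3, mul2_rE, add_mul]

lemma incl_mul_left (b x : B k) : incl k (b * x) = lP k b (incl k x) := by
  simp [incl, lP, lB, coev_mul_left, insertOne_lE]

lemma incl_mul_right (b x : B k) : incl k (x * b) = rP k b (incl k x) := by
  simp [incl, rP, rB, coev_mul_right, insertOne_rE]

lemma homotopy₀_lP (b : B k) (x : B k × B₃ k) :
    homotopy₀ k (lP k b x) = lE k b (homotopy₀ k x) := by
  simp [homotopy₀, lP, traceMiddle_lB3]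

lemma homotopy₀_rP (b : B k) (x : B k × B₃ k) :
    homotopy₀ k (rP k b x) = rE k b (homotopy₀ k x) := by
  simp [homotopy₀, rP, traceMiddle_rB3]

lemma homotopy₁_lE (b : B k) (x : E k) : homotopy₁ k (lE k b x) = lP k b (homotopy₁ k x) := by
  simp [homotopy₁, lP, lB, insertOne_lE]

lemma homotopy₁_rE (b : B k) (x : E k) : homotopy₁ k (rE k b x) = rP k b (homotopy₁ k x) := by
  simp [homotopy₁, rP, rB, insertOne_rE]

lemma proj_comp_dm1 : proj k ∘ₗ dm1 k = 0 :=
  LinearMap.ext fun x => by simp [proj, dm1, traceMiddle_lTensor_coev]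

lemma d0_comp_incl : d0 k ∘ₗ incl k = 0 :=
  LinearMap.ext fun b => by simp [d0, incl, m3_insertOne]

lemma proj_comp_incl : proj k ∘ₗ incl k = LinearMap.id :=
  LinearMap.ext fun b => by simp [proj, incl, traceMiddle_insertOne]

lemma homotopy₀_comp_dm1 : homotopy₀ k ∘ₗ dm1 k = LinearMap.id :=
  LinearMap.ext fun x => by simp [homotopy₀, dm1, traceMiddle_lTensor_coev]

lemma dm1_comp_homotopy₀_add_homotopy₁_comp_d0_add_incl_comp_proj :
    dm1 k ∘ₗ homotopy₀ k + homotopy₁ k ∘ₗ d0 k + incl k ∘ₗ proj k = LinearMap.id := by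
  refine LinearMap.ext fun ⟨b, t⟩ => ?_
  have hB₃ := lTensor_coev_traceMiddle_add_insertOne_m3_sub k t
  simp [dm1, d0, homotopy₀, homotopy₁, incl, proj]
  linear_combination (norm := module) hB₃

lemma d0_comp_homotopy₁ : d0 k ∘ₗ homotopy₁ k = LinearMap.id :=
  LinearMap.ext fun x => by simp [d0, homotopy₁, m3_insertOne]

theorem twist_comp_inverse_twist_homotopic_to_identity :
    ∃ (φ : B k × B₃ k →ₗ[k] B k) (ψ : B k →ₗ[k] B k × B₃ k)
      (h₀ : B k × B₃ k →ₗ[k] E k) (h₁ : E k →ₗ[k] B k × B₃ k),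
      -- all four maps are maps of (B,B)-bimodules
      (∀ b x, φ (lP k b x) = b * φ x) ∧ (∀ b x, φ (rP k b x) = φ x * b) ∧
      (∀ b x, ψ (b * x) = lP k b (ψ x)) ∧ (∀ b x, ψ (x * b) = rP k b (ψ x)) ∧
      (∀ b x, h₀ (lP k b x) = lE k b (h₀ x)) ∧ (∀ b x, h₀ (rP k b x) = rE k b (h₀ x)) ∧
      (∀ b x, h₁ (lE k b x) = lP k b (h₁ x)) ∧ (∀ b x, h₁ (rE k b x) = rP k b (h₁ x)) ∧
      -- `φ` and `ψ` are chain maps between the total complex and `B`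
      φ.comp (dm1 k) = 0 ∧ (d0 k).comp ψ = 0 ∧
      -- `φ ∘ ψ = id` and `h₀, h₁` give a homotopy from `ψ ∘ φ` to the identity
      φ.comp ψ = (LinearMap.id : B k →ₗ[k] B k) ∧
      (h₀.comp (dm1 k) = (LinearMap.id : E k →ₗ[k] E k)) ∧
      ((dm1 k).comp h₀ + h₁.comp (d0 k) + ψ.comp φ = (LinearMap.id : B k × B₃ k →ₗ[k] B k × B₃ k)) ∧
      ((d0 k).comp h₁ = (LinearMap.id : E k →ₗ[k] E k)) :=
  ⟨proj k, incl k, homotopy₀ k, homotopy₁ k, proj_lP k, proj_rP k, incl_mul_left k,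
    incl_mul_right k, homotopy₀_lP k, homotopy₀_rP k, homotopy₁_lE k, homotopy₁_rE k,
    proj_comp_dm1 k, d0_comp_incl k, proj_comp_incl k, homotopy₀_comp_dm1 k,
    dm1_comp_homotopy₀_add_homotopy₁_comp_d0_add_incl_comp_proj k, d0_comp_homotopy₁ k⟩

end ZigZagSphericalTwist
end

section
/- If a complex A_0 → A_1 → ... → A_n in a triangulated category satisfies Hom(A_j[k], A_{j+k+1}) = 0 for all j ≥ 0 and k ≥ 1, then any two convolutions of the complex are isomorphic; if moreover Hom(A_j[k], A_{j+k+2}) = 0 for all j ≥ 0 and k ≥ 1, then a convolution exists. -/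
/-!
Postnikov systems are built and compared one triangle `B_{j-1} → A_j → B_j → B_{j-1}⟦1⟧` at a
time. Along such a tower the vanishing of `Hom(A_j⟦k⟧, A_{j+k+c})` for `k ≥ 1` propagates to
`Hom(B_j⟦k⟧, A_{j+k+c})`, by the long exact `Hom(-, A_m)` sequence of the shifted triangle.

For `c = 1`: cones of `g_j : B_{j-1} → A_j` and `g'_j : B'_{j-1} → A_j`, which agree up to an
isomorphism `B_{j-1} ≅ B'_{j-1}`, are isomorphic; as `Hom(B_{j-1}⟦1⟧, A_{j+1}) = 0`, maps
`B_j → A_{j+1}` are determined by their composite with `h_j`, so the isomorphism also matches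
`g_{j+1}` with `g'_{j+1}`.

For `c = 2`: as `g_j ≫ f_{j+1} = 0`, `f_{j+1}` factors as `h_j ≫ g_{j+1}` through the cone `B_j`;
then `g_{j+1} ≫ f_{j+2}` vanishes after `h_j`, so it factors through `B_{j-1}⟦1⟧` and is zero
because `Hom(B_{j-1}⟦1⟧, A_{j+2}) = 0`. This is what lets the construction continue.
-/

open CategoryTheory CategoryTheory.Limits CategoryTheory.Pretriangulated

variable {D : Type} [Category D] [Preadditive D] [HasZeroObject D] [HasShift D ℤ]
  [∀ n : ℤ, (CategoryTheory.shiftFunctor D n).Additive] [Pretriangulated D]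

namespace CategoryTheory.Pretriangulated

namespace Triangle

lemma shift_obj₃_hom_eq_zero {T : Triangle D} (hT : T ∈ distTriang D) {W : D} {k k' : ℤ}
    (hk : k + 1 = k') (h₂ : ∀ φ : T.obj₂⟦k⟧ ⟶ W, φ = 0) (h₁ : ∀ φ : T.obj₁⟦k'⟧ ⟶ W, φ = 0)
    (φ : T.obj₃⟦k⟧ ⟶ W) : φ = 0 := by
  obtain ⟨ψ, rfl⟩ := yoneda_exact₃ _ (shift_distinguished T hT k) φ (by
    change (k.negOnePow • T.mor₂⟦k⟧') ≫ φ = 0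
    rw [Linear.units_smul_comp, h₂ (T.mor₂⟦k⟧' ≫ φ), smul_zero])
  have hψ : ψ = 0 :=
    (cancel_epi ((CategoryTheory.shiftFunctorAdd' D k 1 k' hk).hom.app T.obj₁)).1
      ((h₁ _).trans comp_zero.symm)
  rw [hψ, comp_zero]
  rfl

lemma hom_ext_of_distinguished {T : Triangle D} (hT : T ∈ distTriang D) {W : D}
    (hW : ∀ φ : T.obj₁⟦(1 : ℤ)⟧ ⟶ W, φ = 0) {u v : T.obj₃ ⟶ W}
    (huv : T.mor₂ ≫ u = T.mor₂ ≫ v) : u = v := by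
  obtain ⟨ψ, hψ⟩ := yoneda_exact₃ _ hT (u - v) (by rw [Preadditive.comp_sub, huv, sub_self])
  rwa [hW ψ, comp_zero, sub_eq_zero] at hψ

end Triangle

lemma exists_iso_obj₃_of_distinguished {X X' M Y Y' : D} {g : X ⟶ M} {h : M ⟶ Y}
    {w : Y ⟶ X⟦(1 : ℤ)⟧} {g' : X' ⟶ M} {h' : M ⟶ Y'} {w' : Y' ⟶ X'⟦(1 : ℤ)⟧}
    (hT : Triangle.mk g h w ∈ distTriang D) (hT' : Triangle.mk g' h' w' ∈ distTriang D)
    (e : X ≅ X') (hg : g = e.hom ≫ g') : ∃ c : Y ≅ Y', h ≫ c.hom = h' := by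
  let E := isoTriangleOfIso₁₂ _ _ hT hT' e (Iso.refl M) ((Category.comp_id g).trans hg)
  exact ⟨Triangle.π₃.mapIso E, E.hom.comm₂.trans (Category.id_comp h')⟩

end CategoryTheory.Pretriangulated

def ShiftedHomsVanish (X : D) (A : ℕ → D) (j c : ℕ) : Prop :=
  ∀ k : ℕ, 1 ≤ k → ∀ φ : X⟦(k : ℤ)⟧ ⟶ A (j + k + c), φ = 0

namespace ShiftedHomsVanish

variable {A : ℕ → D} {j c : ℕ}

omit [Pretriangulated D] in
lemma of_iso {X Y : D} (e : X ≅ Y) (hX : ShiftedHomsVanish X A j c) :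
    ShiftedHomsVanish Y A j c := fun k hk _ =>
  (cancel_epi (e.hom⟦(k : ℤ)⟧')).1 ((hX k hk _).trans comp_zero.symm)

lemma obj₃ {X Y : D} {g : X ⟶ A (j + 1)} {h : A (j + 1) ⟶ Y} {w : Y ⟶ X⟦(1 : ℤ)⟧}
    (hT : Triangle.mk g h w ∈ distTriang D) (hX : ShiftedHomsVanish X A j c)
    (hA : ShiftedHomsVanish (A (j + 1)) A (j + 1) c) : ShiftedHomsVanish Y A (j + 1) c :=
  fun k hk => Triangle.shift_obj₃_hom_eq_zero hT (k' := ((k + 1 : ℕ) : ℤ)) (by push_cast; rfl)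
    (hA k hk) (by rw [show j + 1 + k + c = j + (k + 1) + c by omega]; exact hX (k + 1) (by omega))

end ShiftedHomsVanish

variable {A : ℕ → D} {f : ∀ j, A j ⟶ A (j + 1)}

structure PostnikovSystem (A : ℕ → D) (f : ∀ j, A j ⟶ A (j + 1)) where
  B : ℕ → D
  e₀ : A 0 ≅ B 0
  g : ∀ j, B j ⟶ A (j + 1)
  h : ∀ j, A (j + 1) ⟶ B (j + 1)
  w : ∀ j, B (j + 1) ⟶ (B j)⟦(1 : ℤ)⟧
  distinguished : ∀ j, Triangle.mk (g j) (h j) (w j) ∈ distTriang D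
  f_zero : f 0 = e₀.hom ≫ g 0
  f_succ : ∀ j, f (j + 1) = h j ≫ g (j + 1)

lemma isConvolution_iff {n : ℕ} {Z : D} :
    IsConvolution n A f Z ↔ ∃ P : PostnikovSystem A f, Nonempty (Z ≅ P.B n) := by
  constructor
  · rintro ⟨B, e₀, g, h, hT, f_zero, f_succ, hZ⟩
    choose w hw using hT
    exact ⟨⟨B, e₀, g, h, w, hw, f_zero, f_succ⟩, hZ⟩
  · rintro ⟨P, hZ⟩
    exact ⟨P.B, P.e₀, P.g, P.h, fun j => ⟨P.w j, P.distinguished j⟩, P.f_zero, P.f_succ, hZ⟩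

namespace PostnikovSystem

lemma shiftedHomsVanish (P : PostnikovSystem A f) {c : ℕ}
    (hA : ∀ j, ShiftedHomsVanish (A j) A j c) : ∀ j, ShiftedHomsVanish (P.B j) A j c
  | 0 => (hA 0).of_iso P.e₀
  | j + 1 => .obj₃ (P.distinguished j) (P.shiftedHomsVanish hA j) (hA (j + 1))

lemma exists_iso (P Q : PostnikovSystem A f) (hP : ∀ j, ShiftedHomsVanish (P.B j) A j 1) :
    ∀ j, ∃ e : P.B j ≅ Q.B j, P.g j = e.hom ≫ Q.g j
  | 0 => ⟨P.e₀.symm ≪≫ Q.e₀, by simp [← Q.f_zero, P.f_zero]⟩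
  | j + 1 => by
    obtain ⟨e, he⟩ := P.exists_iso Q hP j
    obtain ⟨c, hc⟩ := exists_iso_obj₃_of_distinguished (P.distinguished j) (Q.distinguished j) e he
    refine ⟨c, Triangle.hom_ext_of_distinguished (P.distinguished j) (hP j 1 le_rfl) ?_⟩
    change P.h j ≫ P.g (j + 1) = P.h j ≫ c.hom ≫ Q.g (j + 1)
    rw [← P.f_succ, reassoc_of% hc, Q.f_succ]

end PostnikovSystem

structure ConvolutionStage (A : ℕ → D) (f : ∀ j, A j ⟶ A (j + 1)) (j : ℕ) where
  B : D
  g : B ⟶ A (j + 1)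
  g_comp : g ≫ f (j + 1) = 0
  shiftedHomsVanish : ShiftedHomsVanish B A j 2

namespace ConvolutionStage

structure Extension {j : ℕ} (s : ConvolutionStage A f j) where
  next : ConvolutionStage A f (j + 1)
  h : A (j + 1) ⟶ next.B
  w : next.B ⟶ s.B⟦(1 : ℤ)⟧
  distinguished : Triangle.mk s.g h w ∈ distTriang D
  f_succ : f (j + 1) = h ≫ next.g

variable (hf : ∀ j, f j ≫ f (j + 1) = 0) (hA : ∀ j, ShiftedHomsVanish (A j) A j 2)
include hf hA

lemma nonempty_extension {j : ℕ} (s : ConvolutionStage A f j) : Nonempty s.Extension := by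
  obtain ⟨Y, h, w, hT⟩ := distinguished_cocone_triangle s.g
  obtain ⟨g, hg⟩ : ∃ g : Y ⟶ A (j + 1 + 1), f (j + 1) = h ≫ g :=
    Triangle.yoneda_exact₂ _ hT (f (j + 1)) s.g_comp
  have g_comp : g ≫ f (j + 1 + 1) = 0 :=
    Triangle.hom_ext_of_distinguished hT (s.shiftedHomsVanish 1 le_rfl) <| by
      change h ≫ g ≫ f (j + 1 + 1) = h ≫ 0
      rw [comp_zero, ← Category.assoc, ← hg, hf]
  exact ⟨⟨⟨Y, g, g_comp, .obj₃ hT s.shiftedHomsVanish (hA (j + 1))⟩, h, w, hT, hg⟩⟩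

noncomputable def extend {j : ℕ} (s : ConvolutionStage A f j) : s.Extension :=
  Classical.choice (s.nonempty_extension hf hA)

noncomputable def tower : ∀ j, ConvolutionStage A f j
  | 0 => ⟨A 0, f 0, hf 0, hA 0⟩
  | j + 1 => ((tower j).extend hf hA).next

end ConvolutionStage

lemma nonempty_postnikovSystem (hf : ∀ j, f j ≫ f (j + 1) = 0)
    (hA : ∀ j, ShiftedHomsVanish (A j) A j 2) : Nonempty (PostnikovSystem A f) :=
  let s := ConvolutionStage.tower hf hA
  let t j := (s j).extend hf hA
  ⟨{ B j := (s j).B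
     e₀ := Iso.refl _
     g j := (s j).g
     h j := (t j).h
     w j := (t j).w
     distinguished j := (t j).distinguished
     f_zero := (Category.id_comp _).symm
     f_succ j := (t j).f_succ }⟩

/-- If `Hom(A_j[k], A_{j+k+1}) = 0` for all `j ≥ 0`, `k ≥ 1`, then any two convolutions
of the complex `A_0 → ⋯ → A_n` are isomorphic; if moreover
`Hom(A_j[k], A_{j+k+2}) = 0` for all `j ≥ 0`, `k ≥ 1`, then a convolution exists. -/
theorem convolution_unique_and_exists
    (n : ℕ) (A : ℕ → D) (f : ∀ j, A j ⟶ A (j + 1))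
    (hcpx : ∀ j, f j ≫ f (j + 1) = 0)
    (hvan1 : ∀ (j k : ℕ), 1 ≤ k → ∀ φ : (A j)⟦(k : ℤ)⟧ ⟶ A (j + k + 1), φ = 0) :
    (∀ Z Z', IsConvolution n A f Z → IsConvolution n A f Z' → Nonempty (Z ≅ Z')) ∧
    ((∀ (j k : ℕ), 1 ≤ k → ∀ φ : (A j)⟦(k : ℤ)⟧ ⟶ A (j + k + 2), φ = 0) →
      ∃ Z, IsConvolution n A f Z) := by
  refine ⟨fun Z Z' hZ hZ' => ?_, fun hvan2 => ?_⟩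
  · obtain ⟨P, ⟨eZ⟩⟩ := isConvolution_iff.1 hZ
    obtain ⟨Q, ⟨eZ'⟩⟩ := isConvolution_iff.1 hZ'
    obtain ⟨e, -⟩ := P.exists_iso Q (P.shiftedHomsVanish hvan1) n
    exact ⟨eZ ≪≫ e ≪≫ eZ'.symm⟩
  · obtain ⟨P⟩ := nonempty_postnikovSystem hcpx hvan2
    exact ⟨P.B n, isConvolution_iff.2 ⟨P, ⟨Iso.refl _⟩⟩⟩
end
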